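/- Associativity of environment composition: for well-formed environments e1, e2, e3 with lev(e1) ≤ nl1, len(e2) = ol2, lev(e2) ≤ nl2, len(e3) = ol3, the environments A = {{e1, nl1, ol2, e2}, nl2 + (nl1 ∸ ol2), ol3, e3} and B = {e1, nl1, ol2 + (ol3 ∸ nl2), {e2, nl2, ol3, e3}} rewrite by the reading and merging rules to a common simple environment. -/

import Mathlib

/- Terms of the suspension calculus: constants, de Bruijn indices `#i`,
applications, abstractions, and suspensions `[t, ol, nl, e]`. -/
mutual
inductive Tm : Type where
  | const : Nat → Tm
  | idx : Nat → Tm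
  | app : Tm → Tm → Tm
  | lam : Tm → Tm
  | susp : Tm → Nat → Nat → Env → Tm
/-- Environments: `nil`, cons cells `(t,n)::e`, and merges `{e1, nl1, ol2, e2}`. -/
inductive Env : Type where
  | nil : Env
  | econs : Tm → Nat → Env → Env
  | merge : Env → Nat → Nat → Env → Env
end

/-- Length of an environment. -/
def Env.len : Env → Nat
  | .nil => 0
  | .econs _ _ e => 1 + Env.len e
  | .merge e1 nl1 _ e2 => Env.len e1 + (Env.len e2 - nl1)

/-- Level of an environment. -/
def Env.lev : Env → Nat
  | .nil => 0
  | .econs _ l _ => l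
  | .merge _ nl1 ol2 e2 => Env.lev e2 + (nl1 - ol2)

/- Well-formedness of suspension expressions. -/
mutual
inductive WfTm : Tm → Prop where
  | const : ∀ c, WfTm (.const c)
  | idx : ∀ i, 1 ≤ i → WfTm (.idx i)
  | app : ∀ {t1 t2}, WfTm t1 → WfTm t2 → WfTm (.app t1 t2)
  | lam : ∀ {t}, WfTm t → WfTm (.lam t)
  | susp : ∀ {t e} (ol nl : Nat), WfTm t → WfEnv e → Env.len e = ol →
      Env.lev e ≤ nl → WfTm (.susp t ol nl e)
inductive WfEnv : Env → Prop where
  | nil : WfEnv .nil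
  | econs : ∀ {t e} (l : Nat), WfTm t → WfEnv e → Env.lev e ≤ l → WfEnv (.econs t l e)
  | merge : ∀ {e1 e2} (nl1 ol2 : Nat), WfEnv e1 → WfEnv e2 → Env.lev e1 ≤ nl1 →
      Env.len e2 = ol2 → WfEnv (.merge e1 nl1 ol2 e2)
end

/- One-step rewriting by the reading rules (r1)-(r6) and merging rules
(m1)-(m6), applied at any subexpression. -/
mutual
inductive SR : Tm → Tm → Prop where
  | r1 : ∀ c ol nl e, SR (.susp (.const c) ol nl e) (.const c)
  | r2 : ∀ i nl, 1 ≤ i → SR (.susp (.idx i) 0 nl .nil) (.idx (i + nl))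
  | r3 : ∀ ol nl t l e, SR (.susp (.idx 1) ol nl (.econs t l e)) (.susp t 0 (nl - l) .nil)
  | r4 : ∀ i ol nl t l e, 1 < i →
      SR (.susp (.idx i) ol nl (.econs t l e)) (.susp (.idx (i - 1)) (ol - 1) nl e)
  | r5 : ∀ t1 t2 ol nl e,
      SR (.susp (.app t1 t2) ol nl e) (.app (.susp t1 ol nl e) (.susp t2 ol nl e))
  | r6 : ∀ t ol nl e,
      SR (.susp (.lam t) ol nl e)
         (.lam (.susp t (ol + 1) (nl + 1) (.econs (.idx 1) (nl + 1) e)))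
  | m1 : ∀ t ol1 nl1 e1 ol2 nl2 e2,
      SR (.susp (.susp t ol1 nl1 e1) ol2 nl2 e2)
         (.susp t (ol1 + (ol2 - nl1)) (nl2 + (nl1 - ol2)) (.merge e1 nl1 ol2 e2))
  | appL : ∀ {t1 t1'} (t2 : Tm), SR t1 t1' → SR (.app t1 t2) (.app t1' t2)
  | appR : ∀ (t1 : Tm) {t2 t2'}, SR t2 t2' → SR (.app t1 t2) (.app t1 t2')
  | lamC : ∀ {t t'}, SR t t' → SR (.lam t) (.lam t')
  | suspT : ∀ {t t'} ol nl e, SR t t' → SR (.susp t ol nl e) (.susp t' ol nl e)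
  | suspE : ∀ t ol nl {e e'}, SRE e e' → SR (.susp t ol nl e) (.susp t ol nl e')
inductive SRE : Env → Env → Prop where
  | m2 : ∀ e1 nl1, SRE (.merge e1 nl1 0 .nil) e1
  | m3 : ∀ ol2 e2, SRE (.merge .nil 0 ol2 e2) e2
  | m4 : ∀ nl1 ol2 t l e2, 1 ≤ nl1 →
      SRE (.merge .nil nl1 ol2 (.econs t l e2)) (.merge .nil (nl1 - 1) (ol2 - 1) e2)
  | m5 : ∀ t n e1 nl1 ol2 s l e2, n < nl1 →
      SRE (.merge (.econs t n e1) nl1 ol2 (.econs s l e2))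
          (.merge (.econs t n e1) (nl1 - 1) (ol2 - 1) e2)
  | m6 : ∀ t n e1 ol2 s l e2,
      SRE (.merge (.econs t n e1) n ol2 (.econs s l e2))
          (.econs (.susp t ol2 l (.econs s l e2)) (l + (n - ol2))
                  (.merge e1 n ol2 (.econs s l e2)))
  | consT : ∀ {t t'} l e, SR t t' → SRE (.econs t l e) (.econs t' l e)
  | consE : ∀ t l {e e'}, SRE e e' → SRE (.econs t l e) (.econs t l e')
  | mergeL : ∀ {e1 e1'} nl1 ol2 e2, SRE e1 e1' →
      SRE (.merge e1 nl1 ol2 e2) (.merge e1' nl1 ol2 e2)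
  | mergeR : ∀ e1 nl1 ol2 {e2 e2'}, SRE e2 e2' →
      SRE (.merge e1 nl1 ol2 e2) (.merge e1 nl1 ol2 e2')
end

/-- Simple environments: nil-terminated lists of bindings (no merges). -/
inductive SimpleEnv : Env → Prop where
  | nil : SimpleEnv .nil
  | econs : ∀ t l {e}, SimpleEnv e → SimpleEnv (.econs t l e)

/-!
On simple environments the merging rules can be computed: `simpleMerge` is the normal form of
`{e1, nl1, ol2, e2}` under (m2)-(m6). Every well-formed environment reduces to a simple one of
the same length and no larger level, so both composites reduce to the corresponding composites
of `simpleMerge`. The left one reduces to the right one by induction on `(e3, e2, e1)`: in each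
case both sides take the same step, except when the heads of all three environments combine.
There the left side yields the head `[[t, ol2, l2, e2], ol3, l3, e3]`, which reduces by (m1) to
`[t, ol2 + (ol3 ∸ l2), l3 + (l2 ∸ ol3), {e2, l2, ol3, e3}]` and, once the inner merge is
normalised, to the head produced on the right.
-/

open Relation

theorem WfEnv.econs_iff {t : Tm} {l : Nat} {e : Env} :
    WfEnv (.econs t l e) ↔ WfTm t ∧ WfEnv e ∧ e.lev ≤ l :=
  ⟨fun | .econs _ ht he hl => ⟨ht, he, hl⟩, fun ⟨ht, he, hl⟩ => .econs l ht he hl⟩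

theorem WfEnv.merge_iff {e1 e2 : Env} {nl1 ol2 : Nat} :
    WfEnv (.merge e1 nl1 ol2 e2) ↔ WfEnv e1 ∧ WfEnv e2 ∧ e1.lev ≤ nl1 ∧ e2.len = ol2 :=
  ⟨fun | .merge _ _ h1 h2 h3 h4 => ⟨h1, h2, h3, h4⟩,
   fun ⟨h1, h2, h3, h4⟩ => .merge nl1 ol2 h1 h2 h3 h4⟩

theorem SimpleEnv.tail {t : Tm} {l : Nat} {e : Env} : SimpleEnv (.econs t l e) → SimpleEnv e
  | .econs _ _ h => h

theorem reflTransGen_econs {t t' : Tm} {e e' : Env} (l : Nat) (ht : ReflTransGen SR t t')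
    (he : ReflTransGen SRE e e') : ReflTransGen SRE (.econs t l e) (.econs t' l e') :=
  (ht.lift (Env.econs · l e) fun _ _ => .consT l e).trans
    (he.lift (Env.econs t' l ·) fun _ _ => .consE t' l)

theorem reflTransGen_merge {e1 e1' e2 e2' : Env} (nl1 ol2 : Nat) (h1 : ReflTransGen SRE e1 e1')
    (h2 : ReflTransGen SRE e2 e2') :
    ReflTransGen SRE (.merge e1 nl1 ol2 e2) (.merge e1' nl1 ol2 e2') :=
  (h1.lift (Env.merge · nl1 ol2 e2) fun _ _ => .mergeL nl1 ol2 e2).trans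
    (h2.lift (Env.merge e1' nl1 ol2 ·) fun _ _ => .mergeR e1' nl1 ol2)

theorem reflTransGen_susp_env (t : Tm) (ol nl : Nat) {e e' : Env} (h : ReflTransGen SRE e e') :
    ReflTransGen SR (.susp t ol nl e) (.susp t ol nl e') :=
  h.lift (Tm.susp t ol nl ·) fun _ _ => .suspE t ol nl

def simpleMerge : Env → Nat → Nat → Env → Env
  | e1, _, _, .nil => e1
  | .nil, 0, _, e2 => e2
  | .nil, nl1 + 1, ol2, .econs _ _ e2 => simpleMerge .nil nl1 (ol2 - 1) e2
  | .econs t n e1, nl1, ol2, .econs s l e2 =>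
      if n < nl1 then simpleMerge (.econs t n e1) (nl1 - 1) (ol2 - 1) e2
      else .econs (.susp t ol2 l (.econs s l e2)) (l + (n - ol2))
        (simpleMerge e1 nl1 ol2 (.econs s l e2))
  -- junk clauses: the arguments are not simple
  | .merge .., _, _, _ => .nil
  | _, _, _, .merge .. => .nil
termination_by e1 _ _ e2 => (sizeOf e2, sizeOf e1)

structure IsSimpleReduct (e s : Env) : Prop where
  simple : SimpleEnv s
  wf : WfEnv s
  len_eq : s.len = e.len
  lev_le : s.lev ≤ e.lev
  reduces : ReflTransGen SRE e s

theorem isSimpleReduct_simpleMerge {e1 e2 : Env} {nl1 ol2 : Nat} (hs1 : SimpleEnv e1)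
    (hs2 : SimpleEnv e2) (hw : WfEnv (.merge e1 nl1 ol2 e2)) :
    IsSimpleReduct (.merge e1 nl1 ol2 e2) (simpleMerge e1 nl1 ol2 e2) := by
  fun_induction simpleMerge e1 nl1 ol2 e2
  case case1 e1 nl1 ol2 =>
    obtain ⟨hw1, -, h1, rfl⟩ := WfEnv.merge_iff.mp hw
    exact ⟨hs1, hw1, by simp [Env.len], by simpa [Env.lev, Env.len] using h1,
      .single (.m2 e1 nl1)⟩
  case case2 ol2 e2 _ =>
    obtain ⟨-, hw2, -, -⟩ := WfEnv.merge_iff.mp hw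
    exact ⟨hs2, hw2, by simp [Env.len], by simp [Env.lev], .single (.m3 ol2 e2)⟩
  case case3 nl1 ol2 s l e2 ih =>
    obtain ⟨-, hw2, -, rfl⟩ := WfEnv.merge_iff.mp hw
    obtain ⟨-, hw2, hl⟩ := WfEnv.econs_iff.mp hw2
    replace hs2 := hs2.tail
    have r := ih .nil hs2 (.merge _ _ .nil hw2 (by simp [Env.lev]) (by simp [Env.len]))
    refine ⟨r.simple, r.wf, ?_, ?_, .head (.m4 _ _ _ _ _ (by omega)) r.reduces⟩
    · have := r.len_eq; simp only [Env.len] at this ⊢; omega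
    · have := r.lev_le; simp only [Env.lev, Env.len] at this ⊢; omega
  case case4 t n e1 nl1 ol2 s l e2 hlt ih =>
    obtain ⟨hw1, hw2, h1, rfl⟩ := WfEnv.merge_iff.mp hw
    obtain ⟨-, hw2, hl⟩ := WfEnv.econs_iff.mp hw2
    replace hs2 := hs2.tail
    have r := ih hs1 hs2
      (.merge _ _ hw1 hw2 (by simp only [Env.lev] at h1 ⊢; omega) (by simp [Env.len]))
    refine ⟨r.simple, r.wf, ?_, ?_, .head (.m5 _ _ _ _ _ _ _ _ hlt) r.reduces⟩
    · have := r.len_eq; simp only [Env.len] at this ⊢; omega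
    · have := r.lev_le; simp only [Env.lev, Env.len] at this ⊢; omega
  case case5 t n e1 nl1 ol2 s l e2 _ ih =>
    obtain ⟨hw1, hw2, h1, rfl⟩ := WfEnv.merge_iff.mp hw
    obtain ⟨ht, hw1, hl1⟩ := WfEnv.econs_iff.mp hw1
    obtain rfl : n = nl1 := by simp only [Env.lev] at h1; omega
    replace hs1 := hs1.tail
    have r := ih hs1 hs2 (.merge _ _ hw1 hw2 hl1 rfl)
    refine ⟨.econs _ _ r.simple, .econs _ (.susp _ _ ht hw2 rfl le_rfl) r.wf r.lev_le,
      ?_, by simp [Env.lev], .head (.m6 _ _ _ _ _ _ _) ?_⟩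
    · have := r.len_eq; simp only [Env.len] at this ⊢; omega
    · exact reflTransGen_econs _ .refl r.reduces
  case case6 => cases hs1
  case case7 => cases hs2

namespace IsSimpleReduct

theorem econs {t : Tm} {l : Nat} {e s : Env} (r : IsSimpleReduct e s) (ht : WfTm t)
    (hl : e.lev ≤ l) : IsSimpleReduct (.econs t l e) (.econs t l s) :=
  ⟨.econs t l r.simple, .econs l ht r.wf (r.lev_le.trans hl), by simp [Env.len, r.len_eq],
    le_rfl, reflTransGen_econs l .refl r.reduces⟩

theorem wfEnv_merge {e1 e2 s1 s2 : Env} {nl1 ol2 : Nat} (r1 : IsSimpleReduct e1 s1)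
    (r2 : IsSimpleReduct e2 s2) (hw : WfEnv (.merge e1 nl1 ol2 e2)) :
    WfEnv (.merge s1 nl1 ol2 s2) :=
  have ⟨_, _, h1, h2⟩ := WfEnv.merge_iff.mp hw
  .merge nl1 ol2 r1.wf r2.wf (r1.lev_le.trans h1) (r2.len_eq.trans h2)

theorem merge {e1 e2 s1 s2 : Env} {nl1 ol2 : Nat} (r1 : IsSimpleReduct e1 s1)
    (r2 : IsSimpleReduct e2 s2) (hw : WfEnv (.merge e1 nl1 ol2 e2)) :
    IsSimpleReduct (.merge e1 nl1 ol2 e2) (simpleMerge s1 nl1 ol2 s2) := by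
  have r := isSimpleReduct_simpleMerge r1.simple r2.simple (r1.wfEnv_merge r2 hw)
  refine ⟨r.simple, r.wf, ?_, ?_,
    (reflTransGen_merge nl1 ol2 r1.reduces r2.reduces).trans r.reduces⟩
  · simpa [Env.len, r1.len_eq, r2.len_eq] using r.len_eq
  · have := r2.lev_le; have := r.lev_le; simp only [Env.lev] at *; omega

end IsSimpleReduct

theorem exists_isSimpleReduct : ∀ {e : Env}, WfEnv e → ∃ s, IsSimpleReduct e s
  | .nil, hw => ⟨.nil, .nil, hw, rfl, le_rfl, .refl⟩
  | .econs _ _ _, hw =>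
    have ⟨ht, he, hl⟩ := WfEnv.econs_iff.mp hw
    have ⟨_, r⟩ := exists_isSimpleReduct he
    ⟨_, r.econs ht hl⟩
  | .merge .., hw =>
    have ⟨he1, he2, _, _⟩ := WfEnv.merge_iff.mp hw
    have ⟨_, r1⟩ := exists_isSimpleReduct he1
    have ⟨_, r2⟩ := exists_isSimpleReduct he2
    ⟨_, r1.merge r2 hw⟩

@[simp]
theorem simpleMerge_nil_right (e1 : Env) (nl1 ol2 : Nat) : simpleMerge e1 nl1 ol2 .nil = e1 := by
  cases e1 <;> simp [simpleMerge]

@[simp]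
theorem simpleMerge_nil_zero (ol2 : Nat) (e2 : Env) : simpleMerge .nil 0 ol2 e2 = e2 := by
  cases e2 <;> simp [simpleMerge]

theorem simpleMerge_econs_self (t : Tm) (n : Nat) (e1 : Env) (ol2 : Nat) (s : Tm) (l : Nat)
    (e2 : Env) :
    simpleMerge (.econs t n e1) n ol2 (.econs s l e2) =
      .econs (.susp t ol2 l (.econs s l e2)) (l + (n - ol2))
        (simpleMerge e1 n ol2 (.econs s l e2)) := by
  simp [simpleMerge]

theorem simpleMerge_econs_of_lev_lt {e1 : Env} {nl1 : Nat} (hs : SimpleEnv e1)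
    (h : e1.lev < nl1) (ol2 : Nat) (s : Tm) (l : Nat) (e2 : Env) :
    simpleMerge e1 nl1 ol2 (.econs s l e2) = simpleMerge e1 (nl1 - 1) (ol2 - 1) e2 := by
  cases hs with
  | nil => obtain ⟨k, rfl⟩ := Nat.exists_eq_add_one_of_ne_zero h.ne'; simp [simpleMerge]
  | econs => simp only [Env.lev] at h; simp [simpleMerge, h]

theorem reflTransGen_susp_susp (t : Tm) (ol2 m : Nat) {e2 e3 : Env} {nl2 ol3 : Nat}
    (hs2 : SimpleEnv e2) (hs3 : SimpleEnv e3) (hw : WfEnv (.merge e2 nl2 ol3 e3)) :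
    ReflTransGen SR (.susp (.susp t ol2 nl2 e2) ol3 m e3)
      (.susp t (ol2 + (ol3 - nl2)) (m + (nl2 - ol3)) (simpleMerge e2 nl2 ol3 e3)) :=
  .head (.m1 ..) (reflTransGen_susp_env _ _ _ (isSimpleReduct_simpleMerge hs2 hs3 hw).reduces)

theorem reflTransGen_simpleMerge_assoc_econs_self (t : Tm) {e1 e2 e3 : Env} {n ol2 ol3 : Nat}
    {s u : Tm} {p m : Nat} (hs2 : SimpleEnv (.econs s p e2)) (hs3 : SimpleEnv (.econs u m e3))
    (hw23 : WfEnv (.merge (.econs s p e2) p ol3 (.econs u m e3)))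
    (ih : ReflTransGen SRE
      (simpleMerge (simpleMerge e1 n ol2 (.econs s p e2)) (p + (n - ol2)) ol3 (.econs u m e3))
      (simpleMerge e1 n (ol2 + (ol3 - p)) (simpleMerge (.econs s p e2) p ol3 (.econs u m e3)))) :
    ReflTransGen SRE
      (simpleMerge (simpleMerge (.econs t n e1) n ol2 (.econs s p e2)) (p + (n - ol2)) ol3
        (.econs u m e3))
      (simpleMerge (.econs t n e1) n (ol2 + (ol3 - p))
        (simpleMerge (.econs s p e2) p ol3 (.econs u m e3))) := by
  have hX := simpleMerge_econs_self s p e2 ol3 u m e3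
  rw [simpleMerge_econs_self, simpleMerge_econs_self, hX, simpleMerge_econs_self, ← hX]
  rw [show m + (p + (n - ol2) - ol3) = m + (p - ol3) + (n - (ol2 + (ol3 - p))) by omega]
  exact reflTransGen_econs _ (reflTransGen_susp_susp t ol2 m hs2 hs3 hw23) ih

theorem reflTransGen_simpleMerge_assoc :
    ∀ {e1 e2 e3 : Env} {nl1 ol2 nl2 ol3 : Nat}, SimpleEnv e1 → SimpleEnv e2 → SimpleEnv e3 →
      WfEnv (.merge e1 nl1 ol2 e2) → WfEnv (.merge e2 nl2 ol3 e3) →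
      ReflTransGen SRE (simpleMerge (simpleMerge e1 nl1 ol2 e2) (nl2 + (nl1 - ol2)) ol3 e3)
        (simpleMerge e1 nl1 (ol2 + (ol3 - nl2)) (simpleMerge e2 nl2 ol3 e3))
  | _, _, .nil, _, _, _, _, _, _, _, _, hw23 => by
    obtain ⟨-, -, -, rfl⟩ := WfEnv.merge_iff.mp hw23
    simpa [Env.len] using ReflTransGen.refl
  | e1, e2, .econs u m e3, nl1, ol2, nl2, ol3, hs1, hs2, hs3, hw12, hw23 => by
    obtain ⟨hw1, hw2, h1, hol2⟩ := WfEnv.merge_iff.mp hw12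
    obtain ⟨-, hw3, h2, hol3⟩ := WfEnv.merge_iff.mp hw23
    simp only [Env.len] at hol3
    rcases h2.lt_or_eq with h2 | h2
    · -- both sides drop the head of `e3`
      have hlev12 := (isSimpleReduct_simpleMerge hs1 hs2 hw12).lev_le
      simp only [Env.lev] at hlev12
      rw [simpleMerge_econs_of_lev_lt hs2 h2, simpleMerge_econs_of_lev_lt
        (isSimpleReduct_simpleMerge hs1 hs2 hw12).simple (by omega)]
      have hw23' : WfEnv (.merge e2 (nl2 - 1) (ol3 - 1) e3) :=
        .merge _ _ hw2 (WfEnv.econs_iff.mp hw3).2.1 (by omega) (by omega)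
      convert reflTransGen_simpleMerge_assoc hs1 hs2 hs3.tail hw12 hw23' using 3 <;> omega
    match e2, hs2 with
    | .merge .., hs2 => nomatch hs2
    | .nil, _ =>
      simp only [Env.len, Env.lev] at hol2 h2
      subst hol2 h2
      simpa using ReflTransGen.refl
    | .econs s p e2, hs2 =>
      simp only [Env.len, Env.lev] at hol2 h2
      subst h2
      obtain ⟨-, hw2', hlev2⟩ := WfEnv.econs_iff.mp hw2
      rcases h1.lt_or_eq with h1 | h1
      · -- both sides drop the head of `e2`
        rw [simpleMerge_econs_self s p e2 ol3 u m e3, simpleMerge_econs_of_lev_lt hs1 h1,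
          simpleMerge_econs_of_lev_lt hs1 h1]
        have hw12' : WfEnv (.merge e1 (nl1 - 1) (ol2 - 1) e2) :=
          .merge _ _ hw1 hw2' (by omega) (by omega)
        have hw23' : WfEnv (.merge e2 p ol3 (.econs u m e3)) :=
          .merge _ _ hw2' hw3 hlev2 (by simp only [Env.len]; omega)
        convert reflTransGen_simpleMerge_assoc hs1 hs2.tail hs3 hw12' hw23' using 3 <;> omega
      match e1, hs1 with
      | .merge .., hs1 => nomatch hs1
      | .nil, _ =>
        simp only [Env.lev] at h1
        subst h1
        simpa using ReflTransGen.refl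
      | .econs t n e1, hs1 =>
        simp only [Env.lev] at h1
        subst h1
        obtain ⟨-, hw1', hlev1⟩ := WfEnv.econs_iff.mp hw1
        exact reflTransGen_simpleMerge_assoc_econs_self t hs2 hs3 hw23
          (reflTransGen_simpleMerge_assoc hs1.tail hs2 hs3 (.merge _ _ hw1' hw2 hlev1 hol2) hw23)
termination_by e1 e2 e3 => (sizeOf e3, sizeOf e2, sizeOf e1)

/-- associativity of environment composition.  The two ways of
composing three (well-formed) environments via merges rewrite, using the
reading and merging rules, to a common simple environment. -/
theorem merge_associativity :
    ∀ (e1 e2 e3 : Env) (nl1 ol2 nl2 ol3 : Nat),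
      WfEnv e1 → WfEnv e2 → WfEnv e3 →
      Env.lev e1 ≤ nl1 → Env.len e2 = ol2 → Env.lev e2 ≤ nl2 → Env.len e3 = ol3 →
      ∃ C : Env, SimpleEnv C ∧
        Relation.ReflTransGen SRE
          (.merge (.merge e1 nl1 ol2 e2) (nl2 + (nl1 - ol2)) ol3 e3) C ∧
        Relation.ReflTransGen SRE
          (.merge e1 nl1 (ol2 + (ol3 - nl2)) (.merge e2 nl2 ol3 e3)) C := by
  intro e1 e2 e3 nl1 ol2 nl2 ol3 hw1 hw2 hw3 h1 h2 h3 h4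
  have hw12 : WfEnv (.merge e1 nl1 ol2 e2) := .merge _ _ hw1 hw2 h1 h2
  have hw23 : WfEnv (.merge e2 nl2 ol3 e3) := .merge _ _ hw2 hw3 h3 h4
  obtain ⟨s1, r1⟩ := exists_isSimpleReduct hw1
  obtain ⟨s2, r2⟩ := exists_isSimpleReduct hw2
  obtain ⟨s3, r3⟩ := exists_isSimpleReduct hw3
  have hwA : WfEnv (.merge (.merge e1 nl1 ol2 e2) (nl2 + (nl1 - ol2)) ol3 e3) :=
    .merge _ _ hw12 hw3 (by simp only [Env.lev]; omega) h4
  have hwB : WfEnv (.merge e1 nl1 (ol2 + (ol3 - nl2)) (.merge e2 nl2 ol3 e3)) :=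
    .merge _ _ hw1 hw23 h1 (by simp only [Env.len]; omega)
  have rA := (r1.merge r2 hw12).merge r3 hwA
  have rB := r1.merge (r2.merge r3 hw23) hwB
  have hAB := reflTransGen_simpleMerge_assoc r1.simple r2.simple r3.simple
    (r1.wfEnv_merge r2 hw12) (r2.wfEnv_merge r3 hw23)
  exact ⟨_, rB.simple, rA.reduces.trans hAB, rB.reduces⟩
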